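/- arXiv:math/0303043 — 2 statements merged into one kernel-verified Lean document; each statement's English description precedes it below -/
import Mathlib

section
/- Let s and l be positive integers with l ≥ 2, let p be a prime, and let t₀ ≥ 1 be the integer with p^{t₀-1} ≤ l < p^{t₀}. For t ≥ 1 set f_l(t) = min{ -v_p(H({s}^l;n)) : p^{t-1} ≤ n < p^t }. If there exists an integer τ > t₀ such that f_l(τ) > (l-1)sτ - s, then the set J({s}^l|p) = {n ≥ 0 : p divides the numerator of H({s}^l;n)} is finite. -/
open Classical in
/-- Multiple harmonic sum `H(s₁,…,s_l; n) = ∑_{1 ≤ k₁ < ⋯ < k_l ≤ n} k₁^{-s₁} ⋯ k_l^{-s_l}`,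
encoded via strictly increasing tuples of indices in `{1,…,n}` (an empty sum is `0`,
and `mhs [] n = 1`). -/
noncomputable def mhs (s : List ℕ) (n : ℕ) : ℚ :=
  ∑ k ∈ Finset.univ.filter
      (fun k : Fin s.length → Fin (n + 1) =>
        StrictMono k ∧ ∀ i, 1 ≤ (k i : ℕ)),
    ∏ i, 1 / (((k i : ℕ) : ℚ) ^ s.get i)

open Classical in
/-- `p`-restricted multiple harmonic sum `H*(s; n)`: same sum with all indices
not divisible by `p`. -/
noncomputable def mhsStar (p : ℕ) (s : List ℕ) (n : ℕ) : ℚ :=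
  ∑ k ∈ Finset.univ.filter
      (fun k : Fin s.length → Fin (n + 1) =>
        StrictMono k ∧ ∀ i, 1 ≤ (k i : ℕ) ∧ ¬ p ∣ (k i : ℕ)),
    ∏ i, 1 / (((k i : ℕ) : ℚ) ^ s.get i)

/-!
Write `H_l(n) = H({s}^l; n)` as the `l`-th elementary symmetric function of the `k⁻ˢ`, `k ≤ n`.
Splitting the indices into multiples and non-multiples of `p` gives
`H_l(n) = ∑_{j ≤ l} p^{-sj} H_j(⌊n/p⌋) H*_{l-j}(n)`, where `H*` only uses indices prime to `p`
and so has `v_p(H*) ≥ 0`. For `n < p^{t+1}` the indices of `H_j(⌊n/p⌋)` are below `p^t`, so the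
terms `j < l` have valuation at least `-(l-1)s(t+1)`. If `-v_p(H_l(⌊n/p⌋)) > (l-1)st - s`, the
term `j = l` has strictly smaller valuation and dominates; this carries the bound from the block
`[p^{t-1}, p^t)` to `[p^t, p^{t+1})`, hence from `τ` to every later block, and there it forces
`v_p(H_l(n)) < 0`.
-/

open Finset

section PowersetCard

variable {α R : Type*} [CommSemiring R]

theorem sum_powersetCard_filter_card_eq [DecidableEq α] (S : Finset α) (q : α → Prop)
    [DecidablePred q] (f : α → R) {l j : ℕ} (hj : j ≤ l) :
    ∑ A ∈ S.powersetCard l with #(A.filter q) = j, ∏ k ∈ A, f k =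
      (∑ B ∈ (S.filter q).powersetCard j, ∏ k ∈ B, f k) *
        ∑ C ∈ (S.filter (¬ q ·)).powersetCard (l - j), ∏ k ∈ C, f k := by
  rw [sum_mul_sum, ← sum_product']
  refine sum_nbij' (fun A => (A.filter q, A.filter (¬ q ·))) (fun BC => BC.1 ∪ BC.2)
    ?_ ?_ (fun A _ => filter_union_filter_not_eq q A) ?_
    (fun A _ => (prod_filter_mul_prod_filter_not A q f).symm)
  · intro A hA
    simp only [mem_filter, mem_powersetCard, mem_product] at hA ⊢
    have := card_filter_add_card_filter_not (s := A) q
    exact ⟨⟨filter_subset_filter q hA.1.1, hA.2⟩, filter_subset_filter _ hA.1.1, by omega⟩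
  · rintro ⟨B, C⟩ h
    simp only [mem_filter, mem_powersetCard, mem_product, subset_iff] at h ⊢
    have hBC : Disjoint B C := disjoint_left.2 fun x hB hC => (h.2.1 hC).2 (h.1.1 hB).2
    have hB : (B ∪ C).filter q = B := by ext x; simp only [mem_filter, mem_union]; grind
    refine ⟨⟨fun x hx => ?_, by rw [card_union_of_disjoint hBC]; omega⟩, by rw [hB, h.1.2]⟩
    rcases mem_union.1 hx with hx | hx
    exacts [(h.1.1 hx).1, (h.2.1 hx).1]
  · rintro ⟨B, C⟩ h
    simp only [mem_filter, mem_powersetCard, mem_product, subset_iff] at h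
    ext x <;> simp only [mem_filter, mem_union] <;> grind

theorem sum_powersetCard_prod_eq_sum_mul [DecidableEq α] (S : Finset α) (q : α → Prop)
    [DecidablePred q] (f : α → R) (l : ℕ) :
    ∑ A ∈ S.powersetCard l, ∏ k ∈ A, f k =
      ∑ j ∈ range (l + 1), (∑ B ∈ (S.filter q).powersetCard j, ∏ k ∈ B, f k) *
        ∑ C ∈ (S.filter (¬ q ·)).powersetCard (l - j), ∏ k ∈ C, f k := by
  rw [← sum_fiberwise_of_maps_to (g := fun A => #(A.filter q)) fun A hA =>
    mem_range_succ_iff.2 ((card_filter_le _ _).trans (mem_powersetCard.1 hA).2.le)]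
  exact sum_congr rfl fun j hj => sum_powersetCard_filter_card_eq S q f (mem_range_succ_iff.1 hj)

end PowersetCard

theorem padicValNat_le_of_lt_pow {p k t : ℕ} (hk : k < p ^ t) : padicValNat p k ≤ t := by
  rcases eq_or_ne k 0 with rfl | hk0
  · simp
  exact (padicValNat_le_nat_log k).trans (Nat.log_lt_of_lt_pow hk0 hk).le

section PadicValRat

variable {p : ℕ} [hp : Fact p.Prime]

/- `a = 0 ∨ c ≤ padicValRat p a` is the honest `c ≤ v_p(a)`: `padicValRat p 0 = 0`, not `∞`. -/

theorem padicValRat_add_eq_zero_or_le {c : ℤ} {a b : ℚ} (ha : a = 0 ∨ c ≤ padicValRat p a)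
    (hb : b = 0 ∨ c ≤ padicValRat p b) : a + b = 0 ∨ c ≤ padicValRat p (a + b) := by
  rcases eq_or_ne (a + b) 0 with hab | hab
  · exact .inl hab
  rcases ha with rfl | ha
  · simpa using hb
  rcases hb with rfl | hb
  · exact .inr (by simpa using ha)
  exact .inr ((le_min ha hb).trans (padicValRat.min_le_padicValRat_add hab))

theorem padicValRat_mul_eq_zero_or_le {c d : ℤ} {a b : ℚ} (ha : a = 0 ∨ c ≤ padicValRat p a)
    (hb : b = 0 ∨ d ≤ padicValRat p b) : a * b = 0 ∨ c + d ≤ padicValRat p (a * b) := by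
  rcases eq_or_ne a 0 with rfl | ha0
  · simp
  rcases eq_or_ne b 0 with rfl | hb0
  · simp
  rw [padicValRat.mul ha0 hb0]
  exact .inr (add_le_add (ha.resolve_left ha0) (hb.resolve_left hb0))

theorem padicValRat_sum_eq_zero_or_le {ι : Type*} (S : Finset ι) (f : ι → ℚ) {c : ℤ}
    (h : ∀ i ∈ S, f i = 0 ∨ c ≤ padicValRat p (f i)) :
    ∑ i ∈ S, f i = 0 ∨ c ≤ padicValRat p (∑ i ∈ S, f i) :=
  sum_induction f (fun x => x = 0 ∨ c ≤ padicValRat p x)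
    (fun _ _ => padicValRat_add_eq_zero_or_le) (Or.inl rfl) h

theorem padicValRat_prod_eq_zero_or_le {ι : Type*} (S : Finset ι) (f : ι → ℚ) {c : ℤ}
    (h : ∀ i ∈ S, f i = 0 ∨ c ≤ padicValRat p (f i)) :
    ∏ i ∈ S, f i = 0 ∨ #S * c ≤ padicValRat p (∏ i ∈ S, f i) := by
  induction S using Finset.cons_induction with
  | empty => simp
  | cons i S hi ih =>
    rw [prod_cons, card_cons, Nat.cast_succ, add_one_mul, add_comm]
    exact padicValRat_mul_eq_zero_or_le (h i (mem_cons_self i S))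
      (ih fun j hj => h j (mem_cons_of_mem hj))

theorem padicValRat_sum_powersetCard_prod_eq_zero_or_le {ι : Type*} (S : Finset ι)
    (f : ι → ℚ) {c : ℤ} (h : ∀ i ∈ S, f i = 0 ∨ c ≤ padicValRat p (f i)) (l : ℕ) :
    ∑ A ∈ S.powersetCard l, ∏ i ∈ A, f i = 0 ∨
      l * c ≤ padicValRat p (∑ A ∈ S.powersetCard l, ∏ i ∈ A, f i) :=
  padicValRat_sum_eq_zero_or_le _ _ fun A hA => by
    obtain ⟨hAS, hcard⟩ := mem_powersetCard.1 hA
    simpa [hcard] using padicValRat_prod_eq_zero_or_le A f fun i hi => h i (hAS hi)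

theorem padicValRat_add_eq_of_lt {c : ℤ} {a b : ℚ} (ha : a ≠ 0) (hac : padicValRat p a < c)
    (hb : b = 0 ∨ c ≤ padicValRat p b) : a + b ≠ 0 ∧ padicValRat p (a + b) = padicValRat p a := by
  rcases eq_or_ne b 0 with rfl | hb0
  · simpa using ha
  have hlt := hac.trans_le (hb.resolve_left hb0)
  have hab : a + b ≠ 0 := fun h => by
    rw [eq_neg_of_add_eq_zero_left h, padicValRat.neg] at hlt
    exact hlt.false
  exact ⟨hab, padicValRat.add_eq_of_lt hab ha hb0 hlt⟩

theorem not_dvd_num_of_padicValRat_neg {q : ℚ} (hq : padicValRat p q < 0) :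
    ¬ (p : ℤ) ∣ q.num := by
  intro hnum
  have hden : p ∣ q.den := by
    by_contra hden
    rw [padicValRat_def, padicValNat.eq_zero_of_not_dvd hden] at hq
    omega
  exact hp.out.one_lt.ne' (Nat.eq_one_of_dvd_coprimes q.reduced (Int.natCast_dvd.1 hnum) hden)

end PadicValRat

noncomputable def esymmInvPow (s : ℕ) (S : Finset ℕ) (l : ℕ) : ℚ :=
  ∑ A ∈ S.powersetCard l, ∏ k ∈ A, ((k : ℚ) ^ s)⁻¹

theorem esymmInvPow_zero (s : ℕ) (S : Finset ℕ) : esymmInvPow s S 0 = 1 := by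
  simp [esymmInvPow]

theorem mhs_replicate_eq_esymmInvPow (s l n : ℕ) :
    mhs (List.replicate l s) n = esymmInvPow s (Icc 1 n) l := by
  have hmono {m} (k : Fin m → Fin (n + 1)) (hk : StrictMono k) :
      StrictMono fun i => (k i : ℕ) := Fin.val_strictMono.comp hk
  rw [mhs, esymmInvPow]
  refine sum_bij (fun k _ => univ.image fun i => (k i : ℕ)) ?_ ?_ ?_ ?_
  · intro k hk
    simp only [mem_filter, mem_univ, true_and] at hk
    rw [mem_powersetCard, card_image_of_injective _ (hmono k hk.1).injective, card_univ,
      Fintype.card_fin]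
    refine ⟨fun x hx => ?_, List.length_replicate⟩
    obtain ⟨i, -, rfl⟩ := mem_image.1 hx
    exact mem_Icc.2 ⟨hk.2 i, Nat.lt_succ_iff.1 (k i).isLt⟩
  · intro k₁ hk₁ k₂ hk₂ h
    simp only [mem_filter, mem_univ, true_and] at hk₁ hk₂
    have := congrArg (fun A : Finset ℕ => (A : Set ℕ)) h
    simp only [coe_image, coe_univ, Set.image_univ] at this
    funext i
    exact Fin.ext (congrFun (((hmono k₁ hk₁.1).range_inj (hmono k₂ hk₂.1)).1 this) i)
  · intro A hA
    rw [mem_powersetCard] at hA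
    have hcard : #A = (List.replicate l s).length := by rw [hA.2, List.length_replicate]
    have hmem i := mem_Icc.1 (hA.1 (A.orderEmbOfFin_mem hcard i))
    refine ⟨fun i => ⟨A.orderEmbOfFin hcard i, Nat.lt_succ_of_le (hmem i).2⟩, ?_, ?_⟩
    · simp only [mem_filter, mem_univ, true_and]
      exact ⟨fun i j hij => (A.orderEmbOfFin hcard).strictMono hij, fun i => (hmem i).1⟩
    · apply coe_injective
      simp
  · intro k hk
    simp only [mem_filter, mem_univ, true_and] at hk
    rw [prod_image fun i _ j _ hij => (hmono k hk.1).injective hij]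
    simp

theorem Icc_one_filter_dvd_eq_map {p : ℕ} (hp : 0 < p) (n : ℕ) :
    (Icc 1 n).filter (p ∣ ·) = (Icc 1 (n / p)).map ⟨(p * ·), mul_right_injective₀ hp.ne'⟩ := by
  ext x
  simp only [mem_filter, mem_Icc, mem_map, Function.Embedding.coeFn_mk, Nat.le_div_iff_mul_le hp]
  constructor
  · rintro ⟨⟨h1, h2⟩, k, rfl⟩
    exact ⟨k, ⟨Nat.pos_of_mul_pos_left h1, by rwa [mul_comm]⟩, rfl⟩
  · rintro ⟨k, ⟨h1, h2⟩, rfl⟩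
    exact ⟨⟨Nat.mul_pos hp h1, by rwa [mul_comm]⟩, dvd_mul_right p k⟩

theorem esymmInvPow_map_mul_left {p : ℕ} (hp : 0 < p) (s : ℕ) (S : Finset ℕ) (l : ℕ) :
    esymmInvPow s (S.map ⟨(p * ·), mul_right_injective₀ hp.ne'⟩) l =
      ((p : ℚ) ^ s)⁻¹ ^ l * esymmInvPow s S l := by
  rw [esymmInvPow, esymmInvPow, powersetCard_map, sum_map, mul_sum]
  refine sum_congr rfl fun A hA => ?_
  simp only [RelEmbedding.coe_toEmbedding, mapEmbedding_apply, prod_map,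
    Function.Embedding.coeFn_mk, Nat.cast_mul, mul_pow, mul_inv, prod_mul_distrib, prod_const,
    (mem_powersetCard.1 hA).2]

theorem esymmInvPow_Icc_eq_sum {p : ℕ} (hp : 0 < p) (s l n : ℕ) :
    esymmInvPow s (Icc 1 n) l = ∑ j ∈ range (l + 1), ((p : ℚ) ^ s)⁻¹ ^ j *
      esymmInvPow s (Icc 1 (n / p)) j * esymmInvPow s ((Icc 1 n).filter (¬ p ∣ ·)) (l - j) := by
  rw [esymmInvPow, sum_powersetCard_prod_eq_sum_mul _ (p ∣ ·), Icc_one_filter_dvd_eq_map hp]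
  refine sum_congr rfl fun j _ => ?_
  rw [← esymmInvPow_map_mul_left hp]
  rfl

section Valuation

variable {p : ℕ} [Fact p.Prime]

theorem padicValRat_inv_pow_natCast (s k : ℕ) :
    padicValRat p ((k : ℚ) ^ s)⁻¹ = -(s * padicValNat p k) := by
  simp

theorem esymmInvPow_eq_zero_or_le {s t : ℕ} {S : Finset ℕ} (hS : ∀ k ∈ S, k < p ^ t) (l : ℕ) :
    esymmInvPow s S l = 0 ∨ l * -((s : ℤ) * t) ≤ padicValRat p (esymmInvPow s S l) := by
  refine padicValRat_sum_powersetCard_prod_eq_zero_or_le S _ (fun k hk => .inr ?_) l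
  rw [padicValRat_inv_pow_natCast, neg_le_neg_iff]
  exact mul_le_mul_of_nonneg_left (mod_cast padicValNat_le_of_lt_pow (hS k hk)) (by positivity)

theorem esymmInvPow_filter_not_dvd_eq_zero_or_nonneg (s : ℕ) (S : Finset ℕ) (l : ℕ) :
    esymmInvPow s (S.filter (¬ p ∣ ·)) l = 0 ∨
      0 ≤ padicValRat p (esymmInvPow s (S.filter (¬ p ∣ ·)) l) := by
  unfold esymmInvPow
  simpa only [Nat.cast_zero, mul_zero] using
    padicValRat_sum_powersetCard_prod_eq_zero_or_le (p := p) (c := 0) (S.filter (¬ p ∣ ·))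
    (fun k : ℕ => ((k : ℚ) ^ s)⁻¹) (fun k hk => .inr (by
      rw [padicValRat_inv_pow_natCast, padicValNat.eq_zero_of_not_dvd (mem_filter.1 hk).2]
      simp)) l

end Valuation

def LargeDenominator (p s l t n : ℕ) : Prop :=
  esymmInvPow s (Icc 1 n) l ≠ 0 ∧
    ((l : ℤ) - 1) * s * t - s < -padicValRat p (esymmInvPow s (Icc 1 n) l)

theorem LargeDenominator.of_div {p s l t n : ℕ} [hp : Fact p.Prime]
    (hm : LargeDenominator p s l t (n / p)) (hn : n < p ^ (t + 1)) :
    LargeDenominator p s l (t + 1) n := by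
  set P : ℚ := ((p : ℚ) ^ s)⁻¹
  have hP : P ≠ 0 := inv_ne_zero (pow_ne_zero s (Nat.cast_ne_zero.2 hp.out.ne_zero))
  have hvP (j : ℕ) : padicValRat p (P ^ j) = -(j * s) := by
    simp [P, padicValRat.self hp.out.one_lt]
  have hmt : n / p < p ^ t := Nat.div_lt_of_lt_mul (by rwa [← pow_succ'])
  set lead := P ^ l * esymmInvPow s (Icc 1 (n / p)) l
  set rest := ∑ j ∈ range l, P ^ j * esymmInvPow s (Icc 1 (n / p)) j *
    esymmInvPow s ((Icc 1 n).filter (¬ p ∣ ·)) (l - j)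
  have hsplit : esymmInvPow s (Icc 1 n) l = lead + rest := by
    rw [esymmInvPow_Icc_eq_sum hp.out.pos, sum_range_succ, Nat.sub_self, esymmInvPow_zero,
      mul_one, add_comm]
  have hlead : padicValRat p lead = -(l * s) + padicValRat p (esymmInvPow s (Icc 1 (n / p)) l) := by
    rw [padicValRat.mul (pow_ne_zero l hP) hm.1, hvP]
  have hrest : rest = 0 ∨ -(((l : ℤ) - 1) * s * (t + 1)) ≤ padicValRat p rest := by
    refine padicValRat_sum_eq_zero_or_le _ _ fun j hj => ?_
    have hjl : (j : ℤ) + 1 ≤ l := mod_cast mem_range.1 hj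
    have hH := esymmInvPow_eq_zero_or_le (p := p) (s := s) (S := Icc 1 (n / p))
      (fun k hk => (mem_Icc.1 hk).2.trans_lt hmt) j
    have hH' := esymmInvPow_filter_not_dvd_eq_zero_or_nonneg (p := p) s (Icc 1 n) (l - j)
    refine (padicValRat_mul_eq_zero_or_le (padicValRat_mul_eq_zero_or_le
      (.inr (hvP j).symm.le) hH) hH').imp_right (le_trans' · ?_)
    have : 0 ≤ ((l : ℤ) - 1 - j) * s * (t + 1) :=
      mul_nonneg (mul_nonneg (by linarith) (Nat.cast_nonneg s)) (by positivity)
    nlinarith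
  obtain ⟨hne, hval⟩ := padicValRat_add_eq_of_lt (mul_ne_zero (pow_ne_zero l hP) hm.1)
    (by rw [hlead]; linarith [hm.2]) hrest
  rw [LargeDenominator, hsplit, hval, hlead]
  refine ⟨hne, ?_⟩
  push_cast
  nlinarith [hm.2, (Nat.cast_nonneg s : (0 : ℤ) ≤ s)]

theorem largeDenominator_log_add_one {p s l τ : ℕ} [hp : Fact p.Prime] (hτ : 1 ≤ τ)
    (hbase : ∀ n, p ^ (τ - 1) ≤ n → n < p ^ τ → LargeDenominator p s l τ n) {n : ℕ}
    (hn : p ^ (τ - 1) ≤ n) : LargeDenominator p s l (Nat.log p n + 1) n := by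
  induction n using Nat.strong_induction_on with
  | _ n ih =>
  have hp1 := hp.out.one_lt
  rcases lt_or_ge n (p ^ τ) with hnτ | hnτ
  · have hlog : Nat.log p n = τ - 1 :=
      Nat.log_eq_of_pow_le_of_lt_pow hn (by rwa [Nat.sub_add_cancel hτ])
    rw [hlog, Nat.sub_add_cancel hτ]
    exact hbase n hn hnτ
  · have hlog : τ ≤ Nat.log p n := Nat.le_log_of_pow_le hp1 hnτ
    have hm : p ^ (τ - 1) ≤ n / p := by
      rwa [Nat.le_div_iff_mul_le hp.out.pos, ← pow_succ, Nat.sub_add_cancel hτ]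
    have hmn : n / p < n := Nat.div_lt_self ((pow_pos hp.out.pos τ).trans_le hnτ) hp1
    have := ih (n / p) hmn hm
    rw [Nat.log_div_base, Nat.sub_add_cancel (by omega)] at this
    exact this.of_div (Nat.lt_pow_succ_log_self hp1 n)

theorem LargeDenominator.not_dvd_num {p s l t n : ℕ} [Fact p.Prime] (hl : 2 ≤ l) (ht : 1 ≤ t)
    (h : LargeDenominator p s l t n) : ¬ (p : ℤ) ∣ (esymmInvPow s (Icc 1 n) l).num := by
  have hlt : (1 : ℤ) ≤ ((l : ℤ) - 1) * t := one_le_mul_of_one_le_of_one_le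
    (by linarith [(Nat.cast_le (α := ℤ)).2 hl]) (mod_cast ht)
  have : 0 ≤ (((l : ℤ) - 1) * t - 1) * s := mul_nonneg (by linarith) (Nat.cast_nonneg s)
  exact not_dvd_num_of_padicValRat_neg (by linarith [h.2])

theorem stmt2_general (s l p : ℕ) (hl : 2 ≤ l) (hp : p.Prime) (t₀ : ℕ)
    (hcrit : ∃ τ : ℕ, t₀ < τ ∧
      ∀ n : ℕ, p ^ (τ - 1) ≤ n → n < p ^ τ →
        mhs (List.replicate l s) n ≠ 0 ∧
          ((l : ℤ) - 1) * s * τ - s < -(padicValRat p (mhs (List.replicate l s) n))) :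
    {n : ℕ | (p : ℤ) ∣ (mhs (List.replicate l s) n).num}.Finite := by
  have := Fact.mk hp
  obtain ⟨τ, hτ, hbase⟩ := hcrit
  simp_rw [mhs_replicate_eq_esymmInvPow] at hbase ⊢
  refine (Set.finite_lt_nat (p ^ (τ - 1))).subset fun n hn =>
    Set.mem_ofPred.2 (lt_of_not_ge fun hge => ?_)
  exact (largeDenominator_log_add_one (by omega) hbase hge).not_dvd_num hl (Nat.succ_pos _) hn

/-- Criterion for homogeneous sums `H({s}^l; ·)`: if for some `τ > t₀`
(where `p^{t₀-1} ≤ l < p^{t₀}`) the minimum `f_l(τ)` of `-v_p(H({s}^l;n))` over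
`p^{τ-1} ≤ n < p^τ` exceeds `(l-1)sτ - s`, then `J({s}^l|p)` is finite. -/
theorem stmt2 (s l p : ℕ) (hs : 0 < s) (hl : 2 ≤ l) (hp : p.Prime)
    (t₀ : ℕ) (ht₀ : 1 ≤ t₀) (ht₀l : p ^ (t₀ - 1) ≤ l) (hlt₀ : l < p ^ t₀)
    (hcrit : ∃ τ : ℕ, t₀ < τ ∧
      ∀ n : ℕ, p ^ (τ - 1) ≤ n → n < p ^ τ →
        mhs (List.replicate l s) n ≠ 0 ∧
          ((l : ℤ) - 1) * s * τ - s < -(padicValRat p (mhs (List.replicate l s) n))) :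
    {n : ℕ | (p : ℤ) ∣ (mhs (List.replicate l s) n).num}.Finite :=
  stmt2_general s l p hl hp t₀ hcrit
end

section
/- Let s and l be positive integers and let p be an odd prime with p > 2ls+1. Then p divides the numerator of H({2s}^l; p-1), and for every j with 0 ≤ j ≤ l-1, p divides the numerator of H({2s}^l; j+(p-1)/2); that is, {p-1} ∪ { j+(p-1)/2 : 0 ≤ j ≤ l-1 } ⊆ J₁({2s}^l | p). -/
/-!
Modulo `p`, `H({2s}^l; n)` is the `l`-th elementary symmetric function of the `k^{-2s}`,
`1 ≤ k ≤ n`. For `n = p - 1` the power sums `∑ k^{-2sb}`, `1 ≤ b ≤ l`, vanish mod `p` because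
`0 < 2sb < p - 1`; for `n = (p - 1)/2` they vanish too, since `k` and `p - k` contribute
equally to the full sum. As `l < p`, Newton's identities turn this into `e_m = 0` for
`1 ≤ m ≤ l`. Finally, adjoining `j < l` further variables `y` to the half range `x` keeps
`e_l` zero: in `e_l(x, y) = ∑ e_a(x) e_{l-a}(y)` the term `a = 0` vanishes because `y` has
fewer than `l` entries, and the others by the previous step.
-/

open Finset

namespace Multiset

variable {R : Type*}

theorem esymm_map_ringHom [CommSemiring R] {S : Type*} [CommSemiring S] (f : R →+* S)
    (s : Multiset R) (n : ℕ) : (s.map f).esymm n = f (s.esymm n) := by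
  simp [esymm, powersetCard_map, map_multiset_sum, map_multiset_prod, map_map]

theorem esymm_cons_succ [CommSemiring R] (a : R) (s : Multiset R) (n : ℕ) :
    (a ::ₘ s).esymm (n + 1) = s.esymm (n + 1) + a * s.esymm n := by
  simp [esymm, map_map, sum_map_mul_left]

theorem esymm_add_eq_zero [CommSemiring R] {s : Multiset R} {l : ℕ}
    (hs : ∀ m, 1 ≤ m → m ≤ l → s.esymm m = 0) (t : Multiset R) {m : ℕ}
    (ht : card t < m) (hm : m ≤ l) : (s + t).esymm m = 0 := by
  induction t using Multiset.induction generalizing m with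
  | empty => simpa using hs m ht hm
  | cons a t ih =>
    rw [card_cons] at ht
    obtain ⟨n, rfl⟩ : ∃ n, m = n + 1 := ⟨m - 1, by omega⟩
    rw [add_cons, esymm_cons_succ, ih (by omega) hm, ih (by omega) (by omega), mul_zero, add_zero]

theorem esymm_eq_zero_of_sum_map_pow_eq_zero [CommRing R] [IsDomain R] (s : Multiset R)
    {m : ℕ} (hm : (m : R) ≠ 0) (h : ∀ b, 1 ≤ b → b ≤ m → (s.map (· ^ b)).sum = 0) :
    s.esymm m = 0 := by
  classical
  let φ := MvPolynomial.aeval (R := R) fun x : s => (x : R)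
  have newton := congrArg φ (MvPolynomial.mul_esymm_eq_sum s R m)
  have hesymm (n : ℕ) : φ (MvPolynomial.esymm s R n) = s.esymm n :=
    (MvPolynomial.aeval_esymm_eq_multiset_esymm s R n _).trans (by rw [map_univ_coe])
  have hpsum (b : ℕ) : φ (MvPolynomial.psum s R b) = (s.map (· ^ b)).sum := by
    simp only [φ, MvPolynomial.psum, map_sum, map_pow, MvPolynomial.aeval_X]
    exact congrArg Multiset.sum (map_univ s (· ^ b))
  rw [map_mul, map_mul, map_sum, map_natCast, map_pow, map_neg, map_one, hesymm] at newton
  rw [Finset.sum_eq_zero fun a ha => ?_, mul_zero] at newton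
  · exact (mul_eq_zero.mp newton).resolve_left hm
  simp only [Finset.mem_filter, Finset.HasAntidiagonal.mem_antidiagonal] at ha
  rw [map_mul, hpsum, h a.2 (by omega) (by omega), mul_zero]

end Multiset

namespace Rat

variable (p : ℕ) [Fact p.Prime]

theorem natCast_den_ne_zero_of_mem_integer {q : ℚ} (hq : q ∈ (padicValuation p).integer) :
    (q.den : ZMod p) ≠ 0 := by
  rwa [Ne, ZMod.natCast_eq_zero_iff, ← padicValuation_le_one_iff]

def integerToZMod : (padicValuation p).integer →+* ZMod p where
  toFun q := ((q : ℚ) : ZMod p)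
  map_one' := by simp
  map_mul' x y := cast_mul_of_ne_zero (natCast_den_ne_zero_of_mem_integer p x.2)
    (natCast_den_ne_zero_of_mem_integer p y.2)
  map_zero' := by simp
  map_add' x y := cast_add_of_ne_zero (natCast_den_ne_zero_of_mem_integer p x.2)
    (natCast_den_ne_zero_of_mem_integer p y.2)

theorem natCast_dvd_num_of_cast_eq_zero {q : ℚ} (hq : ¬ p ∣ q.den) (h : (q : ZMod p) = 0) :
    (p : ℤ) ∣ q.num := by
  rw [cast_def, div_eq_zero_iff, ZMod.intCast_zmod_eq_zero_iff_dvd, ZMod.natCast_eq_zero_iff] at h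
  exact h.resolve_right hq

theorem natCast_dvd_num_esymm {s : Multiset ℚ} (hs : ∀ x ∈ s, ¬ p ∣ x.den) {n : ℕ}
    (h : (s.map ((↑) : ℚ → ZMod p)).esymm n = 0) : (p : ℤ) ∣ (s.esymm n).num := by
  lift s to Multiset (padicValuation p).integer using
    fun x hx => padicValuation_le_one_iff.mpr (hs x hx)
  rw [← Subring.coe_subtype, Multiset.esymm_map_ringHom]
  refine natCast_dvd_num_of_cast_eq_zero p (padicValuation_le_one_iff.mp (s.esymm n).2) ?_
  rw [Multiset.map_map] at h
  exact (Multiset.esymm_map_ringHom (integerToZMod p) s n).symm.trans h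

end Rat

namespace ZMod

theorem sum_Icc_natCast_eq_sum_units {p : ℕ} [Fact p.Prime] {M : Type*} [AddCommMonoid M]
    (f : ZMod p → M) : ∑ k ∈ Icc 1 (p - 1), f k = ∑ u : (ZMod p)ˣ, f u := by
  have hp := (Fact.out : p.Prime).pos
  refine Finset.sum_bij' (fun k hk => Units.mk0 (k : ZMod p) ?_) (fun u _ => (u : ZMod p).val)
    (fun _ _ => mem_univ _) (fun u _ => ?_) (fun k hk => ?_)
    (fun u _ => Units.ext (natCast_zmod_val _)) (fun _ _ => rfl)
  · rw [mem_Icc] at hk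
    rw [Ne, natCast_eq_zero_iff]
    exact Nat.not_dvd_of_pos_of_lt (by omega) (by omega)
  · have := val_lt (u : ZMod p)
    have := (val_ne_zero (u : ZMod p)).mpr u.ne_zero
    rw [mem_Icc]; omega
  · rw [mem_Icc] at hk
    simp [val_cast_of_lt (show k < p by omega)]

theorem sum_Icc_inv_pow_eq_zero {p : ℕ} [Fact p.Prime] {e : ℕ} (he : ¬ p - 1 ∣ e) :
    ∑ k ∈ Icc 1 (p - 1), ((k : ZMod p))⁻¹ ^ e = 0 := by
  classical
  rw [sum_Icc_natCast_eq_sum_units (fun x => x⁻¹ ^ e)]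
  simp_rw [← Units.val_inv_eq_inv_val]
  refine (Equiv.sum_comp (Equiv.inv _) (fun u : (ZMod p)ˣ => (u : ZMod p) ^ e)).trans ?_
  rw [FiniteField.sum_pow_units, ZMod.card, if_neg he]

theorem sum_Icc_eq_two_nsmul_sum_Icc_half {n : ℕ} (hn : Odd n) {M : Type*} [AddCommMonoid M]
    (f : ZMod n → M) (hf : ∀ x, f (-x) = f x) :
    ∑ k ∈ Icc 1 (n - 1), f k = 2 • ∑ k ∈ Icc 1 ((n - 1) / 2), f k := by
  obtain ⟨q, rfl⟩ := hn
  simp only [add_tsub_cancel_right, mul_div_cancel_left₀ q two_ne_zero]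
  have hsplit : ∑ k ∈ Ioc 0 q, f k + ∑ k ∈ Ioc q (2 * q), f k = ∑ k ∈ Ioc 0 (2 * q), f k :=
    sum_Ioc_consecutive _ (Nat.zero_le q) (by omega)
  have hreflect : ∑ k ∈ Ioc q (2 * q), f k = ∑ k ∈ Ioc 0 q, f k := by
    refine sum_nbij' (fun k => 2 * q + 1 - k) (fun k => 2 * q + 1 - k) ?_ ?_ ?_ ?_ ?_
    any_goals (intro k hk; simp only [mem_Ioc] at hk ⊢; omega)
    intro k hk
    rw [mem_Ioc] at hk
    rw [Nat.cast_sub (by omega), natCast_self, zero_sub, hf]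
  have hIcc (m : ℕ) : Icc 1 m = Ioc 0 m := by ext; simp only [mem_Icc, mem_Ioc]; omega
  rw [hIcc, hIcc, two_nsmul, ← hsplit, hreflect]

theorem sum_Icc_half_inv_pow_eq_zero {p : ℕ} [Fact p.Prime] (hp : Odd p) {e : ℕ} (he : Even e)
    (hdvd : ¬ p - 1 ∣ e) : ∑ k ∈ Icc 1 ((p - 1) / 2), ((k : ZMod p))⁻¹ ^ e = 0 := by
  have htwo : (2 : ZMod p) ≠ 0 := Ring.two_ne_zero <| by
    rw [ringChar_zmod_n]; rintro rfl; exact Nat.not_even_iff_odd.mpr hp even_two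
  have h := sum_Icc_eq_two_nsmul_sum_Icc_half hp (fun x : ZMod p => x⁻¹ ^ e)
    fun x => by rw [inv_neg, he.neg_pow]
  rw [sum_Icc_inv_pow_eq_zero hdvd, nsmul_eq_mul, Nat.cast_two] at h
  exact (mul_eq_zero.mp h.symm).resolve_left htwo

end ZMod

open Classical in
theorem sum_strictMono_prod_eq_sum_powersetCard_prod {R : Type*} [CommSemiring R] (g : ℕ → R)
    (L n : ℕ) :
    ∑ k ∈ univ.filter (fun k : Fin L → Fin (n + 1) => StrictMono k ∧ ∀ i, 1 ≤ (k i : ℕ)),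
      ∏ i, g (k i) = ∑ A ∈ (Icc 1 n).powersetCard L, ∏ a ∈ A, g a := by
  have hval {k : Fin L → Fin (n + 1)} (hk : StrictMono k) : StrictMono fun i => (k i : ℕ) :=
    Fin.val_strictMono.comp hk
  have hcard {k : Fin L → Fin (n + 1)} (hk : StrictMono k) :
      (univ.image fun i => (k i : ℕ)).card = L := by
    rw [card_image_of_injective _ (hval hk).injective, card_univ, Fintype.card_fin]
  have hlt {A : Finset ℕ} (hA : A ⊆ Icc 1 n) (a) (ha : a ∈ A) : 1 ≤ a ∧ a < n + 1 := by
    have := mem_Icc.mp (hA ha); omega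
  refine sum_bij' (fun k _ => univ.image fun i => (k i : ℕ))
    (fun A hA i => ⟨A.orderEmbOfFin (mem_powersetCard.mp hA).2 i,
      (hlt (mem_powersetCard.mp hA).1 _ (orderEmbOfFin_mem _ _ i)).2⟩) ?_ ?_ ?_ ?_ ?_
  · intro k hk
    obtain ⟨hk, h1⟩ := (mem_filter.mp hk).2
    refine mem_powersetCard.mpr ⟨fun a ha => ?_, hcard hk⟩
    obtain ⟨i, -, rfl⟩ := mem_image.mp ha
    exact mem_Icc.mpr ⟨h1 i, Nat.lt_succ_iff.mp (k i).isLt⟩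
  · intro A hA
    obtain ⟨hsub, hA⟩ := mem_powersetCard.mp hA
    refine mem_filter.mpr ⟨mem_univ _, fun i j hij => (A.orderEmbOfFin hA).strictMono hij,
      fun i => (hlt hsub _ (orderEmbOfFin_mem _ _ i)).1⟩
  · intro k hk
    obtain ⟨hk, -⟩ := (mem_filter.mp hk).2
    funext i
    exact Fin.ext (congrFun (orderEmbOfFin_unique (hcard hk)
      (fun i => mem_image_of_mem _ (mem_univ i)) (hval hk)).symm i)
  · intro A hA
    apply coe_injective
    simp
  · intro k hk
    rw [prod_image fun i _ j _ h => ((hval (mem_filter.mp hk).2.1).injective h)]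

theorem mhs_replicate_eq_esymm (e l n : ℕ) :
    mhs (List.replicate l e) n = ((Icc 1 n).val.map fun k : ℕ => 1 / (k : ℚ) ^ e).esymm l := by
  simp only [mhs, List.get_eq_getElem, List.getElem_replicate]
  rw [sum_strictMono_prod_eq_sum_powersetCard_prod (fun k : ℕ => 1 / (k : ℚ) ^ e),
    List.length_replicate, esymm_map_val]

def invPowers (p e n : ℕ) : Multiset (ZMod p) :=
  (Icc 1 n).val.map fun k : ℕ => ((k : ZMod p))⁻¹ ^ e

theorem esymm_invPowers_add_eq_zero {p e l q j : ℕ}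
    (hq : ∀ m, 1 ≤ m → m ≤ l → (invPowers p e q).esymm m = 0) (hj : j < l) :
    (invPowers p e (q + j)).esymm l = 0 := by
  have hsplit : (Icc 1 (q + j)).val = (Icc 1 q).val + (Icc (q + 1) (q + j)).val := by
    rw [← disjUnion_val (h := disjoint_left.2 fun a ha hb => by
      simp only [mem_Icc] at ha hb; omega)]
    congr 1; ext; simp only [mem_Icc, mem_disjUnion]; omega
  rw [invPowers, hsplit, Multiset.map_add]
  exact Multiset.esymm_add_eq_zero hq _ (by simpa using hj) le_rfl

section

variable {p : ℕ} [Fact p.Prime]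

theorem natCast_dvd_num_mhs_replicate {e l n : ℕ} (hn : n < p)
    (h : (invPowers p e n).esymm l = 0) : (p : ℤ) ∣ (mhs (List.replicate l e) n).num := by
  rw [mhs_replicate_eq_esymm]
  refine Rat.natCast_dvd_num_esymm p ?_ ?_
  · simp only [Multiset.mem_map, mem_val, mem_Icc]
    rintro _ ⟨k, hk, rfl⟩ hdvd
    rw [one_div, ← Nat.cast_pow, Rat.inv_natCast_den_of_pos (pow_pos hk.1 e)] at hdvd
    exact Nat.not_dvd_of_pos_of_lt hk.1 (by omega) ((Fact.out : p.Prime).dvd_of_dvd_pow hdvd)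
  · convert h using 2
    rw [invPowers, Multiset.map_map]
    congr 1; funext k
    simp only [Function.comp_apply, one_div, ← Nat.cast_pow, Rat.cast_inv_nat, inv_pow]

theorem esymm_invPowers_eq_zero {e l n : ℕ} (hlp : l < p)
    (h : ∀ b, 1 ≤ b → b ≤ l → ∑ k ∈ Icc 1 n, ((k : ZMod p))⁻¹ ^ (e * b) = 0) :
    ∀ m, 1 ≤ m → m ≤ l → (invPowers p e n).esymm m = 0 := by
  intro m hm hml
  refine Multiset.esymm_eq_zero_of_sum_map_pow_eq_zero _ ?_ fun b hb hbm => ?_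
  · rw [Ne, ZMod.natCast_eq_zero_iff]
    exact Nat.not_dvd_of_pos_of_lt hm (by omega)
  · simpa [invPowers, Multiset.map_map, Function.comp_def, ← pow_mul] using h b hb (by omega)

end

/-- For `p > 2ls+1` an odd prime, `p` divides the numerator of `H({2s}^l; p-1)` and of
`H({2s}^l; j+(p-1)/2)` for `0 ≤ j ≤ l-1`. -/
theorem stmt18 (s l p : ℕ) (hs : 0 < s) (hl : 0 < l) (hp : p.Prime) (hodd : Odd p)
    (hbig : 2 * l * s + 1 < p) :
    (p : ℤ) ∣ (mhs (List.replicate l (2 * s)) (p - 1)).num ∧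
    ∀ j : ℕ, j ≤ l - 1 →
      (p : ℤ) ∣ (mhs (List.replicate l (2 * s)) (j + (p - 1) / 2)).num := by
  have : Fact p.Prime := ⟨hp⟩
  have h2l : 2 * l + 1 < p := by nlinarith
  have hlp : l < p := by omega
  have hexp (b : ℕ) (hb : 1 ≤ b) (hbl : b ≤ l) : ¬ p - 1 ∣ 2 * s * b := by
    have : 2 * s * b ≤ 2 * l * s := by nlinarith
    exact Nat.not_dvd_of_pos_of_lt (by positivity) (by omega)
  have hfull := esymm_invPowers_eq_zero (p := p) (e := 2 * s) (n := p - 1) hlp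
    fun b hb hbl => ZMod.sum_Icc_inv_pow_eq_zero (hexp b hb hbl)
  have hhalf := esymm_invPowers_eq_zero (p := p) (e := 2 * s) (n := (p - 1) / 2) hlp
    fun b hb hbl => ZMod.sum_Icc_half_inv_pow_eq_zero hodd ⟨s * b, by ring⟩ (hexp b hb hbl)
  refine ⟨natCast_dvd_num_mhs_replicate (by omega) (hfull l hl le_rfl), fun j hj => ?_⟩
  refine natCast_dvd_num_mhs_replicate (by omega) ?_
  rw [add_comm]
  exact esymm_invPowers_add_eq_zero hhalf (by omega)
end
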